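/- For set partitions A of [n] and B of [m] and any n-element subset S of [n+m], the atomic length satisfies ℓ((A↑_S ∪ B↑_{S^c})^!) ≤ ℓ(A^!) + ℓ(B^!), with equality if and only if (A↑_S ∪ B↑_{S^c})^! is a shuffle of the words A^! and B^!. -/

import Mathlib

open scoped Classical
noncomputable section

/-- The ground set `[n] = {1, …, n}`. -/
def ground (n : ℕ) : Finset ℕ := Finset.Icc 1 n

/-- `A` is a set partition of `[n]`. -/
def IsSetPartition (n : ℕ) (A : Finset (Finset ℕ)) : Prop :=
  (∀ B ∈ A, B.Nonempty) ∧
  (∀ B ∈ A, ∀ C ∈ A, B ≠ C → Disjoint B C) ∧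
  A.sup id = ground n

/-- Shift every entry of every part by `n`. -/
def shiftP (n : ℕ) (A : Finset (Finset ℕ)) : Finset (Finset ℕ) :=
  A.image (fun B => B.image (· + n))

/-- Shifted concatenation `A|B` of a set partition `A ⊢ [n]` with `B`. -/
def concatP (n : ℕ) (A B : Finset (Finset ℕ)) : Finset (Finset ℕ) :=
  A ∪ shiftP n B

/-- `A` is an atomic set partition of `[n]`: nonempty and not a nontrivial
shifted concatenation. -/
def AtomicP (n : ℕ) (A : Finset (Finset ℕ)) : Prop :=
  IsSetPartition n A ∧ 0 < n ∧
  ¬ ∃ k B C, 0 < k ∧ k < n ∧ IsSetPartition k B ∧ IsSetPartition (n - k) C ∧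
      A = concatP k B C

/-- Shifted concatenation of a list of (size, set partition) pairs. -/
def concatListP : List (ℕ × Finset (Finset ℕ)) → ℕ × Finset (Finset ℕ)
  | [] => (0, ∅)
  | p :: L => ((concatListP L).1 + p.1, concatP p.1 p.2 (concatListP L).2)

/-- `L` is the atomic factorization `A^!` of the set partition `A ⊢ [n]`. -/
def AtomicFactorization (n : ℕ) (A : Finset (Finset ℕ))
    (L : List (ℕ × Finset (Finset ℕ))) : Prop :=
  (∀ p ∈ L, AtomicP p.1 p.2) ∧ concatListP L = (n, A)

/-- The Bell number: the number of set partitions of `[n]`. -/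
def bell (n : ℕ) : ℕ := Nat.card {A : Finset (Finset ℕ) // IsSetPartition n A}

/-- Stirling numbers of the second kind: set partitions of `[n]` into `k` parts. -/
def stirling2 (n k : ℕ) : ℕ :=
  Nat.card {A : Finset (Finset ℕ) // IsSetPartition n A ∧ A.card = k}

/-- The number of atomic set partitions of `[n]` into `k` parts. -/
def atomCount (n k : ℕ) : ℕ :=
  Nat.card {A : Finset (Finset ℕ) // AtomicP n A ∧ A.card = k}

/-- The number of atomic set partitions of `[n]`. -/
def atomCount' (n : ℕ) : ℕ := Nat.card {A : Finset (Finset ℕ) // AtomicP n A}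

/-- Refinement order: `A ≤ B` iff every part of `A` is contained in a part of `B`. -/
def refines (A B : Finset (Finset ℕ)) : Prop := ∀ a ∈ A, ∃ b ∈ B, a ⊆ b

/-- The meet `A ∧ B` of two set partitions. -/
def meetP (A B : Finset (Finset ℕ)) : Finset (Finset ℕ) :=
  ((A ×ˢ B).image fun p => p.1 ∩ p.2).filter (·.Nonempty)

/-- The set partition `{[n]}` with a single part (empty if `n = 0`). -/
def onePartP (n : ℕ) : Finset (Finset ℕ) := if n = 0 then ∅ else {ground n}

/-- The finite set of set partitions of `[n]` satisfying a predicate `P`. -/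
def SPs (n : ℕ) (P : Finset (Finset ℕ) → Prop) : Finset (Finset (Finset ℕ)) :=
  (ground n).powerset.powerset.filter fun A => IsSetPartition n A ∧ P A

/-- Covering relation for `≤_*`: `B` covers `A` if `B` is obtained from `A` by merging two
parts `a, a'` with every element of `a` smaller than every element of `a'`. -/
def coverStar (A B : Finset (Finset ℕ)) : Prop :=
  ∃ a ∈ A, ∃ a' ∈ A, a ≠ a' ∧ (∀ x ∈ a, ∀ y ∈ a', x < y) ∧
    B = insert (a ∪ a') ((A.erase a).erase a')

/-- The order `≤_*` on set partitions. -/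
def leStar : Finset (Finset ℕ) → Finset (Finset ℕ) → Prop :=
  Relation.ReflTransGen coverStar

/-- Restriction `A↓_S` of a set partition to the entries in `S`. -/
def restrictP (A : Finset (Finset ℕ)) (S : Finset ℕ) : Finset (Finset ℕ) :=
  (A.image (· ∩ S)).filter (·.Nonempty)

/-- The standardization map of a finite set `S`: sends the `i`-th smallest element of `S`
to `i` (1-indexed). -/
def stMap (S : Finset ℕ) (x : ℕ) : ℕ := (S.filter (· ≤ x)).card

/-- Standardization of a set partition: relabel its entries to `{1,…,m}` preserving order. -/
def stdP (A : Finset (Finset ℕ)) : Finset (Finset ℕ) :=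
  A.image fun b => b.image (stMap (A.sup id))

/-- The map raising `{1,…,|S|}` order-preservingly onto `S`. -/
def raiseMap (S : Finset ℕ) (x : ℕ) : ℕ := (S.sort (· ≤ ·)).getD (x - 1) 0

/-- `A↑_S`: raise the entries of `A` order-preservingly so the ground set becomes `S`. -/
def raiseP (S : Finset ℕ) (A : Finset (Finset ℕ)) : Finset (Finset ℕ) :=
  A.image fun b => b.image (raiseMap S)

/-- `IsShuffle l₁ l₂ l`: `l` is a shuffle (interleaving) of `l₁` and `l₂`. -/
inductive IsShuffle {α : Type*} : List α → List α → List α → Prop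
  | nil : IsShuffle [] [] []
  | left {a : α} {l₁ l₂ l : List α} : IsShuffle l₁ l₂ l → IsShuffle (a :: l₁) l₂ (a :: l)
  | right {a : α} {l₁ l₂ l : List α} : IsShuffle l₁ l₂ l → IsShuffle l₁ (a :: l₂) (a :: l)

/-- A word is Lyndon if it is nonempty and lexicographically strictly smaller than all of
its proper cyclic rotations. -/
def LyndonWord {α : Type*} (lt : α → α → Prop) (w : List α) : Prop :=
  w ≠ [] ∧ ∀ i, 0 < i → i < w.length → List.Lex lt w (w.rotate i)

/-- A set partition is Lyndon (with respect to a total order `lt` on atomic set partitions)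
if its atomic factorization is a Lyndon word. -/
def LyndonPartition (lt : ℕ × Finset (Finset ℕ) → ℕ × Finset (Finset ℕ) → Prop)
    (n : ℕ) (A : Finset (Finset ℕ)) : Prop :=
  ∃ L, AtomicFactorization n A L ∧ LyndonWord lt L

/-! ### Set compositions -/

/-- `Φ` is a set composition of `[n]`: an ordered sequence of nonempty pairwise disjoint
sets whose union is `[n]`. -/
def IsSetComposition (n : ℕ) (Φ : List (Finset ℕ)) : Prop :=
  (∀ B ∈ Φ, B.Nonempty) ∧ Φ.Pairwise Disjoint ∧ Φ.foldr (· ∪ ·) ∅ = ground n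

/-- Shift every entry of every part of a set composition by `n`. -/
def shiftC (n : ℕ) (Φ : List (Finset ℕ)) : List (Finset ℕ) :=
  Φ.map (·.image (· + n))

/-- Shifted concatenation `Φ|Ψ` of set compositions, `Φ ⊨ [n]`. -/
def concatC (n : ℕ) (Φ Ψ : List (Finset ℕ)) : List (Finset ℕ) := Φ ++ shiftC n Ψ

/-- An atomic set composition: nonempty and not a nontrivial shifted concatenation. -/
def AtomicC (n : ℕ) (Φ : List (Finset ℕ)) : Prop :=
  IsSetComposition n Φ ∧ 0 < n ∧
  ¬ ∃ k Ψ Γ, 0 < k ∧ k < n ∧ IsSetComposition k Ψ ∧ IsSetComposition (n - k) Γ ∧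
      Φ = concatC k Ψ Γ

/-- Shifted concatenation of a list of (size, set composition) pairs. -/
def concatListC : List (ℕ × List (Finset ℕ)) → ℕ × List (Finset ℕ)
  | [] => (0, [])
  | p :: L => ((concatListC L).1 + p.1, concatC p.1 p.2 (concatListC L).2)

/-- `L` is the atomic factorization `Φ^!` of the set composition `Φ ⊨ [n]`. -/
def AtomicFactorizationC (n : ℕ) (Φ : List (Finset ℕ))
    (L : List (ℕ × List (Finset ℕ))) : Prop :=
  (∀ p ∈ L, AtomicC p.1 p.2) ∧ concatListC L = (n, Φ)

/-- Covering relation for `≤_*` on set compositions: merge two adjacent parts `a, b` with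
every element of `a` smaller than every element of `b`. -/
def coverStarC (Φ Ψ : List (Finset ℕ)) : Prop :=
  ∃ L₁ a b L₂, Φ = L₁ ++ a :: b :: L₂ ∧ (∀ x ∈ a, ∀ y ∈ b, x < y) ∧
    Ψ = L₁ ++ (a ∪ b) :: L₂

/-- The order `≤_*` on set compositions. -/
def leStarC : List (Finset ℕ) → List (Finset ℕ) → Prop :=
  Relation.ReflTransGen coverStarC

/-- The meet operation `Φ ∧ Ψ` on set compositions: the nonempty intersections
`Φ_i ∩ Ψ_j` in lexicographic order of `(i, j)`. -/
def meetC (Φ Ψ : List (Finset ℕ)) : List (Finset ℕ) :=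
  (Φ.flatMap fun a => Ψ.map fun b => a ∩ b).filter (·.Nonempty)

/-- The one-part set composition `([n])` (empty if `n = 0`). -/
def onePartC (n : ℕ) : List (Finset ℕ) := if n = 0 then [] else [ground n]

/-- Lists of length `k` with all entries in `s`. -/
def listsOfLen (s : Finset (Finset ℕ)) : ℕ → Finset (List (Finset ℕ))
  | 0 => {[]}
  | k + 1 => (s ×ˢ listsOfLen s k).image fun p => p.1 :: p.2

/-- The finite set of set compositions of `[n]` satisfying a predicate `P`. -/
def SCs (n : ℕ) (P : List (Finset ℕ) → Prop) : Finset (List (Finset ℕ)) :=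
  ((Finset.range (n + 1)).biUnion fun k => listsOfLen (ground n).powerset k).filter
    fun Φ => IsSetComposition n Φ ∧ P Φ

/-- `Φ↑_S`: raise the entries of a set composition order-preservingly into `S`. -/
def raiseC (S : Finset ℕ) (Φ : List (Finset ℕ)) : List (Finset ℕ) :=
  Φ.map (·.image (raiseMap S))

/-- Standardization of a set composition. -/
def stdC (Φ : List (Finset ℕ)) : List (Finset ℕ) :=
  Φ.map (·.image (stMap (Φ.foldr (· ∪ ·) ∅)))

/-- `α(Φ)`: the composition of part sizes of `Φ`. -/
def alphaC (Φ : List (Finset ℕ)) : List ℕ := Φ.map Finset.card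

/-- The order `≤_#` on set compositions: `Φ ≤_# Ψ` iff `α(Φ) = α(Ψ)` and each atomic factor
of `Φ` is the standardization of the corresponding consecutive block of parts of `Ψ`. -/
def leSharp (Φ Ψ : List (Finset ℕ)) : Prop :=
  alphaC Φ = alphaC Ψ ∧
  ∃ (L : List (ℕ × List (Finset ℕ))) (Bs : List (List (Finset ℕ))),
    (∀ p ∈ L, AtomicC p.1 p.2) ∧ (concatListC L).2 = Φ ∧
    Ψ = Bs.flatten ∧ List.Forall₂ (fun b (l : ℕ × List (Finset ℕ)) => stdC b = l.2) Bs L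

/-! ### Index types -/

/-- Set partitions with their sizes. -/
abbrev SPIdx := {x : ℕ × Finset (Finset ℕ) // IsSetPartition x.1 x.2}

/-- Atomic set partitions with their sizes. -/
abbrev AtomIdx := {x : ℕ × Finset (Finset ℕ) // AtomicP x.1 x.2}

/-- Set compositions with their sizes. -/
abbrev SCIdx := {x : ℕ × List (Finset ℕ) // IsSetComposition x.1 x.2}

/-- Atomic set compositions with their sizes. -/
abbrev AtomCIdx := {x : ℕ × List (Finset ℕ) // AtomicC x.1 x.2}

open Finset

/-!
Call `s` a split point of a set partition `C` of `[N]` if every block of `C` lies in `[1, s]` or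
in `(s, N]`. The split points of `C` are the partial sums of the sizes of its atomic factors, so
there are `ℓ(C^!) + 1` of them. For `C = A↑_S ∪ B↑_T` (`T = Sᶜ`), `s` is a split point of `C`
exactly when `st_S s = #{x ∈ S | x ≤ s}` and `st_T s` are split points of `A` and `B`. Since
`st_S s + st_T s = s` with both maps monotone, at every step between consecutive split points
of `C` one of the two images grows, which gives `ℓ(C^!) + 2 ≤ (ℓ(A^!) + 1) + (ℓ(B^!) + 1)`.
In the equality case the same count, run on the split points beyond the first atom of `C`,
shows that this atom lies entirely in `S` or entirely in `T`; it is then the first atom of `A`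
or of `B`, and removing it gives the shuffle by induction.
-/

lemma mem_ground {n x : ℕ} : x ∈ ground n ↔ 1 ≤ x ∧ x ≤ n := mem_Icc

lemma sup_id_eq_ground_iff {n : ℕ} {A : Finset (Finset ℕ)} :
    A.sup id = ground n ↔ ∀ x, (∃ b ∈ A, x ∈ b) ↔ 1 ≤ x ∧ x ≤ n := by
  simp only [Finset.ext_iff, mem_sup, id, mem_ground]

namespace IsSetPartition

variable {n : ℕ} {A : Finset (Finset ℕ)}

lemma bounds_of_mem (hA : IsSetPartition n A) {b : Finset ℕ} (hb : b ∈ A) {x : ℕ} (hx : x ∈ b) :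
    1 ≤ x ∧ x ≤ n :=
  (sup_id_eq_ground_iff.mp hA.2.2 x).mp ⟨b, hb, hx⟩

lemma exists_mem (hA : IsSetPartition n A) {x : ℕ} (h1 : 1 ≤ x) (hn : x ≤ n) :
    ∃ b ∈ A, x ∈ b :=
  (sup_id_eq_ground_iff.mp hA.2.2 x).mpr ⟨h1, hn⟩

lemma exists_pos (hA : IsSetPartition n A) {b : Finset ℕ} (hb : b ∈ A) : ∃ x ∈ b, 0 < x :=
  (hA.1 b hb).imp fun _ hx => ⟨hx, hA.bounds_of_mem hb hx |>.1⟩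

end IsSetPartition

/-! ### Split points and shifted concatenation -/

def IsSplitPoint (C : Finset (Finset ℕ)) (s : ℕ) : Prop :=
  ∀ b ∈ C, (∀ x ∈ b, x ≤ s) ∨ (∀ x ∈ b, s < x)

def splitPoints (N : ℕ) (C : Finset (Finset ℕ)) : Finset ℕ :=
  (range (N + 1)).filter (IsSplitPoint C)

lemma mem_splitPoints {N s : ℕ} {C : Finset (Finset ℕ)} :
    s ∈ splitPoints N C ↔ s ≤ N ∧ IsSplitPoint C s := by
  simp [splitPoints]

lemma isSplitPoint_union {X Y : Finset (Finset ℕ)} {s : ℕ} :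
    IsSplitPoint (X ∪ Y) s ↔ IsSplitPoint X s ∧ IsSplitPoint Y s := by
  simp only [IsSplitPoint, mem_union, or_imp, forall_and]

lemma IsSetPartition.isSplitPoint_zero {n : ℕ} {A : Finset (Finset ℕ)} (hA : IsSetPartition n A) :
    IsSplitPoint A 0 :=
  fun _ hb => .inr fun _ hx => (hA.bounds_of_mem hb hx).1

lemma IsSetPartition.isSplitPoint_of_le {n s : ℕ} {A : Finset (Finset ℕ)}
    (hA : IsSetPartition n A) (hs : n ≤ s) : IsSplitPoint A s :=
  fun _ hb => .inl fun _ hx => (hA.bounds_of_mem hb hx).2.trans hs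

lemma IsSetPartition.zero_mem_splitPoints {n : ℕ} {A : Finset (Finset ℕ)}
    (hA : IsSetPartition n A) : 0 ∈ splitPoints n A :=
  mem_splitPoints.mpr ⟨Nat.zero_le n, hA.isSplitPoint_zero⟩

lemma isSplitPoint_shiftP {N k s : ℕ} {C : Finset (Finset ℕ)} (hC : IsSetPartition N C) :
    IsSplitPoint (shiftP k C) s ↔ IsSplitPoint C (s - k) := by
  simp only [IsSplitPoint, shiftP, forall_mem_image]
  refine forall₂_congr fun b hb => ?_
  have hpos : ∀ x ∈ b, 1 ≤ x := fun x hx => (hC.bounds_of_mem hb hx).1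
  constructor
  · rintro (h | h)
    · exact .inl fun x hx => by have := h hx; omega
    · exact .inr fun x hx => by have := h hx; have := hpos x hx; omega
  · rintro (h | h)
    · exact .inl fun x hx => by have := h x hx; have := hpos x hx; omega
    · exact .inr fun x hx => by have := h x hx; omega

lemma concatP_isSetPartition {k N : ℕ} {X Y : Finset (Finset ℕ)} (hX : IsSetPartition k X)
    (hY : IsSetPartition N Y) : IsSetPartition (N + k) (concatP k X Y) := by
  refine ⟨?_, ?_, ?_⟩
  · simp only [concatP, shiftP, mem_union, mem_image]
    rintro _ (hb | ⟨b, hb, rfl⟩)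
    exacts [hX.1 _ hb, (hY.1 b hb).image _]
  · simp only [concatP, shiftP, mem_union, mem_image]
    rintro _ (hb | ⟨b, hb, rfl⟩) _ (hc | ⟨c, hc, rfl⟩) hbc
    · exact hX.2.1 _ hb _ hc hbc
    · refine disjoint_left.mpr fun x hxb hxc => ?_
      obtain ⟨y, hy, rfl⟩ := mem_image.mp hxc
      have := hX.bounds_of_mem hb hxb; have := hY.bounds_of_mem hc hy; omega
    · refine disjoint_left.mpr fun x hxb hxc => ?_
      obtain ⟨y, hy, rfl⟩ := mem_image.mp hxb
      have := hX.bounds_of_mem hc hxc; have := hY.bounds_of_mem hb hy; omega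
    · rw [disjoint_image (add_left_injective k)]
      exact hY.2.1 b hb c hc (ne_of_apply_ne _ hbc)
  · refine sup_id_eq_ground_iff.mpr fun x => ⟨?_, fun hx => ?_⟩
    · simp only [concatP, shiftP, mem_union, mem_image]
      rintro ⟨_, hb | ⟨b, hb, rfl⟩, hx⟩
      · have := hX.bounds_of_mem hb hx; omega
      · obtain ⟨y, hy, rfl⟩ := mem_image.mp hx
        have := hY.bounds_of_mem hb hy; omega
    · by_cases hxk : x ≤ k
      · obtain ⟨b, hb, hxb⟩ := hX.exists_mem hx.1 hxk
        exact ⟨b, mem_union_left _ hb, hxb⟩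
      · obtain ⟨b, hb, hxb⟩ := hY.exists_mem (x := x - k) (by omega) (by omega)
        exact ⟨_, mem_union_right _ (mem_image_of_mem _ hb), mem_image.mpr ⟨x - k, hxb, by omega⟩⟩

def dropSet (k : ℕ) (S : Finset ℕ) : Finset ℕ := (S.filter (k < ·)).image (· - k)

lemma mem_dropSet {k y : ℕ} {S : Finset ℕ} : y ∈ dropSet k S ↔ 0 < y ∧ y + k ∈ S := by
  simp only [dropSet, mem_image, mem_filter]
  constructor
  · rintro ⟨x, ⟨hx, hkx⟩, rfl⟩
    exact ⟨by omega, by rwa [Nat.sub_add_cancel hkx.le]⟩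
  · rintro ⟨hy, hyS⟩
    exact ⟨y + k, ⟨hyS, by omega⟩, by omega⟩

lemma image_dropSet_add {s : ℕ} {b : Finset ℕ} (hb : ∀ x ∈ b, s < x) :
    (dropSet s b).image (· + s) = b := by
  ext x
  simp only [mem_image, mem_dropSet]
  refine ⟨fun ⟨y, ⟨_, hy⟩, hyx⟩ => hyx ▸ hy, fun hx => ⟨x - s, ⟨?_, ?_⟩, ?_⟩⟩
  all_goals have := hb x hx
  · omega
  · rwa [Nat.sub_add_cancel this.le]
  · omega

lemma IsSetPartition.exists_eq_concatP {n s : ℕ} {A : Finset (Finset ℕ)}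
    (hA : IsSetPartition n A) (hs : IsSplitPoint A s) (hsn : s ≤ n) :
    ∃ X Y, IsSetPartition s X ∧ IsSetPartition (n - s) Y ∧ A = concatP s X Y := by
  set low := A.filter fun b => ∀ x ∈ b, x ≤ s
  set high := A.filter fun b => ∀ x ∈ b, s < x
  refine ⟨low, high.image (dropSet s), ⟨?_, ?_, ?_⟩, ⟨?_, ?_, ?_⟩, ?_⟩
  · exact fun b hb => hA.1 b (mem_filter.mp hb).1
  · exact fun b hb c hc => hA.2.1 b (mem_filter.mp hb).1 c (mem_filter.mp hc).1
  · refine sup_id_eq_ground_iff.mpr fun x => ⟨?_, fun hx => ?_⟩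
    · rintro ⟨b, hb, hxb⟩
      obtain ⟨hb, hlow⟩ := mem_filter.mp hb
      exact ⟨(hA.bounds_of_mem hb hxb).1, hlow x hxb⟩
    · obtain ⟨b, hb, hxb⟩ := hA.exists_mem hx.1 (hx.2.trans hsn)
      refine ⟨b, mem_filter.mpr ⟨hb, (hs b hb).resolve_right fun h => ?_⟩, hxb⟩
      have := h x hxb; omega
  · simp only [high, mem_image, mem_filter]
    rintro _ ⟨b, ⟨hb, hhigh⟩, rfl⟩
    obtain ⟨x, hx⟩ := hA.1 b hb
    have := hhigh x hx
    exact ⟨x - s, mem_dropSet.mpr ⟨by omega, by rwa [Nat.sub_add_cancel this.le]⟩⟩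
  · simp only [high, mem_image, mem_filter]
    rintro _ ⟨b, ⟨hb, -⟩, rfl⟩ _ ⟨c, ⟨hc, -⟩, rfl⟩ hbc
    have hd := hA.2.1 b hb c hc fun h => hbc (h ▸ rfl)
    exact disjoint_left.mpr fun y hyb hyc =>
      disjoint_left.mp hd (mem_dropSet.mp hyb).2 (mem_dropSet.mp hyc).2
  · refine sup_id_eq_ground_iff.mpr fun x => ⟨?_, fun hx => ?_⟩
    · simp only [high, mem_image, mem_filter]
      rintro ⟨_, ⟨b, ⟨hb, -⟩, rfl⟩, hxb⟩
      obtain ⟨hx, hxs⟩ := mem_dropSet.mp hxb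
      have := hA.bounds_of_mem hb hxs; omega
    · obtain ⟨b, hb, hxb⟩ := hA.exists_mem (x := x + s) (by omega) (by omega)
      have hhigh : ∀ y ∈ b, s < y := (hs b hb).resolve_left fun h => by
        have := h _ hxb; omega
      exact ⟨dropSet s b, mem_image_of_mem _ (mem_filter.mpr ⟨hb, hhigh⟩),
        mem_dropSet.mpr ⟨by omega, hxb⟩⟩
  · have hshift : shiftP s (high.image (dropSet s)) = high := by
      rw [shiftP, image_image]
      exact (image_congr fun b hb => image_dropSet_add (mem_filter.mp hb).2).trans image_id'
    rw [concatP, hshift, ← filter_or, filter_true_of_mem fun b hb => hs b hb]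

lemma AtomicP.not_isSplitPoint {n s : ℕ} {a : Finset (Finset ℕ)} (ha : AtomicP n a)
    (hs0 : 0 < s) (hsn : s < n) : ¬IsSplitPoint a s := fun hs =>
  have ⟨X, Y, hX, hY, he⟩ := ha.1.exists_eq_concatP hs hsn.le
  ha.2.2 ⟨s, X, Y, hs0, hsn, hX, hY, he⟩

lemma concatP_union_shiftP (k : ℕ) (X Y Z : Finset (Finset ℕ)) :
    concatP k X Y ∪ shiftP k Z = concatP k X (Y ∪ Z) := by
  rw [concatP, concatP, shiftP, shiftP, shiftP, image_union, union_assoc]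

lemma filter_concatP {k : ℕ} {X Y : Finset (Finset ℕ)} (hX : ∀ b ∈ X, ∀ x ∈ b, x ≤ k)
    (hY : ∀ b ∈ Y, ∃ x ∈ b, 0 < x) :
    (concatP k X Y).filter (fun b => ∀ x ∈ b, x ≤ k) = X ∧
      (concatP k X Y).filter (fun b => ¬∀ x ∈ b, x ≤ k) = shiftP k Y := by
  have hshift : ∀ b ∈ shiftP k Y, ¬∀ x ∈ b, x ≤ k := by
    simp only [shiftP, forall_mem_image]
    intro b hb hle
    obtain ⟨x, hx, hx0⟩ := hY b hb
    have := hle hx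
    omega
  rw [concatP, filter_union, filter_union, filter_true_of_mem hX, filter_false_of_mem hshift,
    filter_false_of_mem fun b hb h => h (hX b hb), filter_true_of_mem hshift]
  simp

lemma concatP_inj {k : ℕ} {X X' Y Y' : Finset (Finset ℕ)} (hX : ∀ b ∈ X, ∀ x ∈ b, x ≤ k)
    (hX' : ∀ b ∈ X', ∀ x ∈ b, x ≤ k) (hY : ∀ b ∈ Y, ∃ x ∈ b, 0 < x)
    (hY' : ∀ b ∈ Y', ∃ x ∈ b, 0 < x) (h : concatP k X Y = concatP k X' Y') :
    X = X' ∧ Y = Y' := by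
  obtain ⟨hlow, hhigh⟩ := filter_concatP hX hY
  obtain ⟨hlow', hhigh'⟩ := filter_concatP hX' hY'
  rw [h] at hlow hhigh
  exact ⟨hlow.symm.trans hlow',
    image_injective (image_injective (add_left_injective k)) (hhigh.symm.trans hhigh')⟩

/-! ### Atomic factorizations -/

namespace AtomicFactorization

variable {N : ℕ} {C : Finset (Finset ℕ)} {c : ℕ × Finset (Finset ℕ)}
  {L : List (ℕ × Finset (Finset ℕ))}

lemma isSetPartition (h : AtomicFactorization N C L) : IsSetPartition N C := by
  induction L generalizing N C with
  | nil =>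
    obtain ⟨rfl, rfl⟩ := Prod.mk.inj h.2
    exact ⟨by simp, by simp, by simp [ground]⟩
  | cons p L ih =>
    obtain ⟨rfl, rfl⟩ := Prod.mk.inj h.2
    exact concatP_isSetPartition (h.1 p (.head _)).1 (ih ⟨fun q hq => h.1 q (.tail _ hq), rfl⟩)

lemma of_cons (h : AtomicFactorization N C (c :: L)) :
    AtomicP c.1 c.2 ∧ c.1 ≤ N ∧ AtomicFactorization (N - c.1) (concatListP L).2 L ∧
      C = concatP c.1 c.2 (concatListP L).2 := by
  obtain ⟨hN, hC⟩ := Prod.mk.inj h.2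
  refine ⟨h.1 c (.head _), by omega, ⟨fun q hq => h.1 q (.tail _ hq), ?_⟩, hC.symm⟩
  rw [← hN, Nat.add_sub_cancel]

end AtomicFactorization

lemma splitPoints_concatP {k N : ℕ} {a C : Finset (Finset ℕ)} (ha : AtomicP k a)
    (hC : IsSetPartition N C) :
    splitPoints (N + k) (concatP k a C) = insert 0 ((splitPoints N C).image (· + k)) := by
  ext s
  simp only [mem_insert, mem_image, mem_splitPoints, concatP, isSplitPoint_union,
    isSplitPoint_shiftP hC]
  rcases Nat.eq_zero_or_pos s with rfl | hs0
  · simp [ha.1.isSplitPoint_zero, hC.isSplitPoint_zero]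
  rcases lt_or_ge s k with hsk | hks
  · refine ⟨fun ⟨_, h, _⟩ => absurd h (ha.not_isSplitPoint hs0 hsk), ?_⟩
    rintro (h | ⟨t, -, ht⟩) <;> omega
  · constructor
    · rintro ⟨hsN, -, hC'⟩
      exact .inr ⟨s - k, ⟨by omega, hC'⟩, by omega⟩
    · rintro (h | ⟨t, ⟨htN, ht⟩, rfl⟩)
      · omega
      · exact ⟨by omega, ha.1.isSplitPoint_of_le (by omega), by simpa using ht⟩

namespace AtomicFactorization

variable {N : ℕ} {C : Finset (Finset ℕ)} {c : ℕ × Finset (Finset ℕ)}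
  {L : List (ℕ × Finset (Finset ℕ))}

lemma splitPoints_cons (h : AtomicFactorization N C (c :: L)) :
    splitPoints N C = insert 0 ((splitPoints (N - c.1) (concatListP L).2).image (· + c.1)) := by
  obtain ⟨hc, hcN, hL, rfl⟩ := h.of_cons
  rw [← splitPoints_concatP hc hL.isSetPartition, Nat.sub_add_cancel hcN]

lemma card_splitPoints (h : AtomicFactorization N C L) : (splitPoints N C).card = L.length + 1 := by
  induction L generalizing N C with
  | nil =>
    obtain ⟨rfl, rfl⟩ := Prod.mk.inj h.2
    rw [show splitPoints 0 ∅ = {0} by ext; simp [mem_splitPoints, IsSplitPoint]]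
    rfl
  | cons c L ih =>
    obtain ⟨hc, -, hL, -⟩ := h.of_cons
    have h0 : 0 ∉ (splitPoints (N - c.1) (concatListP L).2).image (· + c.1) := by
      simp only [mem_image, not_exists, not_and]
      have := hc.2.1
      omega
    rw [h.splitPoints_cons, card_insert_of_notMem h0,
      card_image_of_injective _ (add_left_injective _), ih hL, List.length_cons]

lemma fst_mem_splitPoints (h : AtomicFactorization N C (c :: L)) : c.1 ∈ splitPoints N C := by
  rw [h.splitPoints_cons]
  refine mem_insert_of_mem (mem_image.mpr ⟨0, mem_splitPoints.mpr ⟨Nat.zero_le _, ?_⟩, zero_add _⟩)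
  exact h.of_cons.2.2.1.isSetPartition.isSplitPoint_zero

lemma fst_le_of_mem_splitPoints (h : AtomicFactorization N C (c :: L)) {s : ℕ}
    (hs : s ∈ splitPoints N C) (hs0 : 0 < s) : c.1 ≤ s := by
  rw [h.splitPoints_cons] at hs
  rcases mem_insert.mp hs with rfl | hs
  · omega
  · obtain ⟨t, -, rfl⟩ := mem_image.mp hs
    omega

end AtomicFactorization

/-! ### Standardization and raising -/

lemma finite_ofPred_mem (S : Finset ℕ) : (Set.ofPred (· ∈ S)).Finite := S.finite_toSet

lemma raiseMap_eq_nth (S : Finset ℕ) (x : ℕ) : raiseMap S x = Nat.nth (· ∈ S) (x - 1) := by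
  rw [Nat.nth_eq_getD_sort (finite_ofPred_mem S), raiseMap]
  congr
  ext; simp

lemma stMap_eq_count (S : Finset ℕ) (k : ℕ) : stMap S k = Nat.count (· ∈ S) (k + 1) := by
  rw [Nat.count_eq_card_filter_range, stMap]
  congr 1
  ext; simp [and_comm]

lemma raiseMap_le_iff {S : Finset ℕ} {x j : ℕ} (hx : 1 ≤ x) (hxS : x ≤ S.card) :
    raiseMap S x ≤ j ↔ x ≤ stMap S j := by
  have hlt : ∀ hf : (Set.ofPred (· ∈ S)).Finite, x - 1 < #hf.toFinset := fun hf => by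
    simpa using (by omega : x - 1 < S.card)
  rw [raiseMap_eq_nth, stMap_eq_count]
  constructor
  · intro h
    have := Nat.count_monotone (· ∈ S) (Nat.add_le_add_right h 1)
    rw [Nat.count_nth_succ hlt] at this
    omega
  · intro h
    exact Nat.lt_add_one_iff.mp (Nat.nth_lt_of_lt_count (by omega))

lemma raiseMap_mem {S : Finset ℕ} {x : ℕ} (hx : 1 ≤ x) (hxS : x ≤ S.card) : raiseMap S x ∈ S := by
  rw [raiseMap_eq_nth]
  exact Nat.nth_mem_of_lt_card (finite_ofPred_mem S) (by simpa using (by omega : x - 1 < S.card))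

lemma stMap_mono (S : Finset ℕ) : Monotone (stMap S) := fun j k hjk => by
  rw [stMap_eq_count, stMap_eq_count]
  exact Nat.count_monotone _ (by omega)

lemma stMap_le_card (S : Finset ℕ) (k : ℕ) : stMap S k ≤ S.card :=
  card_le_card (filter_subset _ _)

lemma stMap_le_self {S : Finset ℕ} (hS : ∀ x ∈ S, 0 < x) (k : ℕ) : stMap S k ≤ k := by
  calc stMap S k ≤ (Icc 1 k).card :=
        card_le_card fun x hx => by
          rw [mem_filter] at hx
          exact mem_Icc.mpr ⟨hS x hx.1, hx.2⟩
    _ = k := by simp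

lemma stMap_add_stMap_dropSet (S : Finset ℕ) {k j : ℕ} (hkj : k ≤ j) :
    stMap S k + stMap (dropSet k S) (j - k) = stMap S j := by
  have hdrop : stMap (dropSet k S) (j - k) = Nat.count (fun i => k + 1 + i ∈ S) (j - k) := by
    rw [stMap_eq_count, Nat.count_succ']
    simp [mem_dropSet, add_comm, add_left_comm]
  rw [hdrop, stMap_eq_count, stMap_eq_count, show j + 1 = k + 1 + (j - k) by omega,
    Nat.count_add _ (k + 1)]

lemma stMap_add_card_dropSet (S : Finset ℕ) (k : ℕ) : stMap S k + (dropSet k S).card = S.card := by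
  rw [dropSet, card_image_of_injOn, stMap, ← card_filter_add_card_filter_not (s := S) (· ≤ k)]
  · simp only [not_le]
  · intro x hx y hy hxy
    simp only [coe_filter, Set.mem_ofPred_eq] at hx hy
    simp only at hxy
    omega

lemma raiseMap_dropSet {S : Finset ℕ} {k x : ℕ} (hx : stMap S k < x) (hxS : x ≤ S.card) :
    raiseMap S x = raiseMap (dropSet k S) (x - stMap S k) + k := by
  have hcard := stMap_add_card_dropSet S k
  have hsplit : ∀ j, k ≤ j → stMap S j = stMap S k + stMap (dropSet k S) (j - k) :=
    fun j hj => (stMap_add_stMap_dropSet S hj).symm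
  set r := raiseMap (dropSet k S) (x - stMap S k)
  have hr : x - stMap S k ≤ stMap (dropSet k S) r :=
    (raiseMap_le_iff (by omega) (by omega)).mp le_rfl
  apply le_antisymm
  · rw [raiseMap_le_iff (by omega) hxS, hsplit (r + k) (by omega), Nat.add_sub_cancel]
    omega
  · have hx' := (raiseMap_le_iff (j := raiseMap S x) (by omega) hxS).mp le_rfl
    have hkx : k ≤ raiseMap S x := by
      by_contra! h
      have := stMap_mono S h.le
      omega
    rw [hsplit _ hkx] at hx'
    have h3 : x - stMap S k ≤ stMap (dropSet k S) (raiseMap S x - k) := by omega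
    have := (raiseMap_le_iff (S := dropSet k S) (j := raiseMap S x - k) (by omega)
      (by omega)).mpr h3
    omega

lemma stMap_eq_self_of_le {S : Finset ℕ} (hS : ∀ x ∈ S, 0 < x) {k j : ℕ} (hk : stMap S k = k)
    (hj : j ≤ k) : stMap S j = j := by
  have := stMap_add_stMap_dropSet S hj
  have := stMap_le_self (fun y hy => (mem_dropSet.mp hy).1) (S := dropSet j S) (k - j)
  have := stMap_le_self hS j
  omega

lemma raiseMap_eq_self {S : Finset ℕ} (hS : ∀ x ∈ S, 0 < x) {k x : ℕ} (hk : stMap S k = k)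
    (hx : 1 ≤ x) (hxk : x ≤ k) : raiseMap S x = x := by
  have hxS : x ≤ S.card := hxk.trans (hk ▸ stMap_le_card S k)
  apply le_antisymm
  · rw [raiseMap_le_iff hx hxS, stMap_eq_self_of_le hS hk hxk]
  · by_contra! h
    have := (raiseMap_le_iff hx hxS).mp (Nat.le_sub_one_of_lt h)
    have := stMap_le_self hS (x - 1)
    omega

lemma isSplitPoint_raiseP {S : Finset ℕ} {A : Finset (Finset ℕ)} (hA : IsSetPartition S.card A)
    {k : ℕ} : IsSplitPoint (raiseP S A) k ↔ IsSplitPoint A (stMap S k) := by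
  simp only [IsSplitPoint, raiseP, forall_mem_image]
  refine forall₂_congr fun b hb => or_congr (forall₂_congr fun x hx => ?_)
    (forall₂_congr fun x hx => ?_)
  all_goals obtain ⟨h1, h2⟩ := hA.bounds_of_mem hb hx
  · exact raiseMap_le_iff h1 h2
  · rw [← not_le, raiseMap_le_iff h1 h2, not_le]

lemma exists_pos_of_mem_raiseP {S : Finset ℕ} (hS : ∀ x ∈ S, 0 < x) {A : Finset (Finset ℕ)}
    (hA : IsSetPartition S.card A) {b : Finset ℕ} (hb : b ∈ raiseP S A) : ∃ x ∈ b, 0 < x := by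
  obtain ⟨b, hbA, rfl⟩ := mem_image.mp hb
  obtain ⟨x, hx⟩ := hA.1 b hbA
  obtain ⟨h1, h2⟩ := hA.bounds_of_mem hbA hx
  exact ⟨_, mem_image_of_mem _ hx, hS _ (raiseMap_mem h1 h2)⟩

lemma raiseP_concatP {S : Finset ℕ} (hS : ∀ x ∈ S, 0 < x) {k : ℕ} (hk : stMap S k = k)
    {X Y : Finset (Finset ℕ)} (hX : IsSetPartition k X) (hY : IsSetPartition (S.card - k) Y) :
    raiseP S (concatP k X Y) = concatP k X (raiseP (dropSet k S) Y) := by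
  rw [raiseP, concatP, image_union]
  congr 1
  · refine (image_congr fun b hb => ?_).trans image_id'
    refine (image_congr fun x hx => ?_).trans image_id'
    obtain ⟨h1, h2⟩ := hX.bounds_of_mem hb hx
    exact raiseMap_eq_self hS hk h1 h2
  · simp only [shiftP, raiseP, image_image]
    refine image_congr fun b hb => ?_
    simp only [Function.comp_def, image_image]
    refine image_congr fun y hy => ?_
    obtain ⟨h1, h2⟩ := hY.bounds_of_mem hb hy
    simp only [raiseMap_dropSet (S := S) (k := k) (x := y + k) (by omega) (by omega), hk,
      Nat.add_sub_cancel]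

lemma raiseP_eq_shiftP {T : Finset ℕ} {k : ℕ} (hk : stMap T k = 0) {B : Finset (Finset ℕ)}
    (hB : IsSetPartition T.card B) : raiseP T B = shiftP k (raiseP (dropSet k T) B) := by
  simp only [shiftP, raiseP, image_image]
  refine image_congr fun b hb => ?_
  simp only [Function.comp_def, image_image]
  refine image_congr fun y hy => ?_
  obtain ⟨h1, h2⟩ := hB.bounds_of_mem hb hy
  simp only [raiseMap_dropSet (S := T) (k := k) (x := y) (by omega) h2, hk, Nat.sub_zero]

/-! ### Merging along an interleaving -/

/-- Between consecutive elements of `P` at least one of `f`, `g` strictly increases. -/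
theorem card_add_one_le_card_image_add_card_image {f g : ℕ → ℕ} (hf : Monotone f)
    (hg : Monotone g) {P : Finset ℕ} (hP : P.Nonempty) (hfg : ∀ t ∈ P, f t + g t = t) :
    P.card + 1 ≤ (P.image f).card + (P.image g).card := by
  induction P using Finset.induction_on_max with
  | empty => simp at hP
  | insert a P hlt ih =>
    rcases P.eq_empty_or_nonempty with rfl | hne
    · simp
    have hrec := ih hne fun t ht => hfg t (mem_insert_of_mem ht)
    have hnew : f a ∉ P.image f ∨ g a ∉ P.image g := by
      by_contra! h
      obtain ⟨x, hx, hfx⟩ := mem_image.mp h.1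
      obtain ⟨y, hy, hgy⟩ := mem_image.mp h.2
      have hmax : max x y ∈ P := by rcases max_choice x y with h | h <;> rw [h] <;> assumption
      have := hf (le_max_left x y)
      have := hg (le_max_right x y)
      have := hfg _ (mem_insert_of_mem hmax)
      have := hfg a (mem_insert_self a P)
      have := hlt _ hmax
      omega
    rw [image_insert, image_insert, card_insert_of_notMem fun ha => (hlt a ha).false]
    have := card_le_card (subset_insert (f a) (P.image f))
    have := card_le_card (subset_insert (g a) (P.image g))
    rcases hnew with h | h <;> rw [card_insert_of_notMem h] <;> omega

lemma IsShuffle.length_eq {α : Type*} {l₁ l₂ l : List α} (h : IsShuffle l₁ l₂ l) :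
    l.length = l₁.length + l₂.length := by
  induction h with
  | nil => rfl
  | left _ ih | right _ ih => simp only [List.length_cons, ih]; omega

/-- The pair `(S, Sᶜ)` of the theorem, in a form symmetric in the two sides. -/
structure IsInterleaving (n m : ℕ) (S T : Finset ℕ) : Prop where
  union_eq : S ∪ T = ground (n + m)
  disjoint : Disjoint S T
  card_left : S.card = n
  card_right : T.card = m

namespace IsInterleaving

variable {n m : ℕ} {S T : Finset ℕ} {A B : Finset (Finset ℕ)}
  {LA LB LC : List (ℕ × Finset (Finset ℕ))}

lemma symm (h : IsInterleaving n m S T) : IsInterleaving m n T S :=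
  ⟨by rw [union_comm, h.union_eq, add_comm], h.disjoint.symm, h.card_right, h.card_left⟩

lemma pos_left (h : IsInterleaving n m S T) : ∀ x ∈ S, 0 < x := fun _ hx =>
  (mem_ground.mp (h.union_eq ▸ mem_union_left T hx)).1

lemma stMap_add (h : IsInterleaving n m S T) {k : ℕ} (hk : k ≤ n + m) :
    stMap S k + stMap T k = k := by
  have hunion : (S ∪ T).filter (· ≤ k) = Icc 1 k := by
    ext x
    simp only [h.union_eq, mem_filter, mem_ground, mem_Icc]
    omega
  rw [stMap, stMap, ← card_union_of_disjoint (disjoint_filter_filter h.disjoint), ← filter_union,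
    hunion, Nat.card_Icc, Nat.add_sub_cancel]

lemma dropSet_left (h : IsInterleaving n m S T) {k : ℕ} (hk : stMap S k = k) :
    IsInterleaving (n - k) m (dropSet k S) (dropSet k T) := by
  have hkn : k ≤ n := h.card_left ▸ hk ▸ stMap_le_card S k
  have hkT : stMap T k = 0 := by have := h.stMap_add (k := k) (by omega); omega
  refine ⟨?_, ?_, ?_, ?_⟩
  · ext y
    rw [mem_union, mem_dropSet, mem_dropSet, ← and_or_left, ← mem_union, h.union_eq]
    simp only [mem_ground]
    omega
  · exact disjoint_left.mpr fun y hS hT =>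
      disjoint_left.mp h.disjoint (mem_dropSet.mp hS).2 (mem_dropSet.mp hT).2
  · have := stMap_add_card_dropSet S k
    have := h.card_left
    omega
  · have := stMap_add_card_dropSet T k
    have := h.card_right
    omega

lemma stMap_mem_splitPoints (h : IsInterleaving n m S T)
    (hA : IsSetPartition n A) {t : ℕ} (ht : t ∈ splitPoints (n + m) (raiseP S A ∪ raiseP T B)) :
    stMap S t ∈ splitPoints n A := by
  rw [mem_splitPoints, isSplitPoint_union, isSplitPoint_raiseP (h.card_left ▸ hA)] at ht
  exact mem_splitPoints.mpr ⟨h.card_left ▸ stMap_le_card S t, ht.2.1⟩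

lemma stMap_right_mem_splitPoints (h : IsInterleaving n m S T)
    (hB : IsSetPartition m B) {t : ℕ} (ht : t ∈ splitPoints (n + m) (raiseP S A ∪ raiseP T B)) :
    stMap T t ∈ splitPoints m B := by
  rw [union_comm, add_comm] at ht
  exact h.symm.stMap_mem_splitPoints hB ht

theorem length_le (hST : IsInterleaving n m S T) (hLA : AtomicFactorization n A LA)
    (hLB : AtomicFactorization m B LB)
    (hLC : AtomicFactorization (n + m) (raiseP S A ∪ raiseP T B) LC) :
    LC.length ≤ LA.length + LB.length := by
  set P := splitPoints (n + m) (raiseP S A ∪ raiseP T B)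
  have hcount := card_add_one_le_card_image_add_card_image (stMap_mono S) (stMap_mono T)
    (P := P) ⟨0, hLC.isSetPartition.zero_mem_splitPoints⟩
    fun t ht => hST.stMap_add (mem_splitPoints.mp ht).1
  have hA : (P.image (stMap S)).card ≤ (splitPoints n A).card := card_le_card <|
    image_subset_iff.mpr fun t ht => hST.stMap_mem_splitPoints hLA.isSetPartition ht
  have hB : (P.image (stMap T)).card ≤ (splitPoints m B).card := card_le_card <|
    image_subset_iff.mpr fun t ht => hST.stMap_right_mem_splitPoints hLB.isSetPartition ht
  rw [hLC.card_splitPoints] at hcount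
  rw [hLA.card_splitPoints] at hA
  rw [hLB.card_splitPoints] at hB
  omega

/-- Otherwise `stMap S` and `stMap T` send the split points from `c.1` on to nonzero split
points of `A` and `B`, and the count of `length_le` gives `ℓ(C) + 1 ≤ ℓ(A) + ℓ(B)`. -/
theorem stMap_eq_or_stMap_eq (hST : IsInterleaving n m S T) (hLA : AtomicFactorization n A LA)
    (hLB : AtomicFactorization m B LB) {c : ℕ × Finset (Finset ℕ)}
    (hLC : AtomicFactorization (n + m) (raiseP S A ∪ raiseP T B) (c :: LC))
    (heq : (c :: LC).length = LA.length + LB.length) :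
    stMap S c.1 = c.1 ∨ stMap T c.1 = c.1 := by
  obtain ⟨-, hcN, hLC', -⟩ := hLC.of_cons
  have hsum := hST.stMap_add hcN
  by_contra! hne
  set P := (splitPoints (n + m - c.1) (concatListP LC).2).image (· + c.1)
  have hPC : P ⊆ splitPoints (n + m) (raiseP S A ∪ raiseP T B) :=
    hLC.splitPoints_cons ▸ subset_insert _ _
  have hPcard : P.card = LC.length + 1 := by
    rw [card_image_of_injective _ (add_left_injective _), hLC'.card_splitPoints]
  have hPge : ∀ t ∈ P, c.1 ≤ t := by simp [P]
  have hcount := card_add_one_le_card_image_add_card_image (stMap_mono S) (stMap_mono T)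
    (card_pos.mp (by omega)) fun t ht => hST.stMap_add (mem_splitPoints.mp (hPC ht)).1
  have hA : (P.image (stMap S)).card ≤ ((splitPoints n A).erase 0).card :=
    card_le_card <| image_subset_iff.mpr fun t ht => mem_erase.mpr
      ⟨by have := stMap_mono S (hPge t ht); omega,
        hST.stMap_mem_splitPoints hLA.isSetPartition (hPC ht)⟩
  have hB : (P.image (stMap T)).card ≤ ((splitPoints m B).erase 0).card :=
    card_le_card <| image_subset_iff.mpr fun t ht => mem_erase.mpr
      ⟨by have := stMap_mono T (hPge t ht); omega,
        hST.stMap_right_mem_splitPoints hLB.isSetPartition (hPC ht)⟩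
  rw [card_erase_of_mem hLA.isSetPartition.zero_mem_splitPoints, hLA.card_splitPoints] at hA
  rw [card_erase_of_mem hLB.isSetPartition.zero_mem_splitPoints, hLB.card_splitPoints] at hB
  simp only [List.length_cons] at heq hA hB
  omega

/-- `c.1` is a split point of `A` and the first split point of `A` is one of the merged
partition, so the first atoms of both have the same size; `concatP_inj` then identifies them. -/
theorem peel (hST : IsInterleaving n m S T) (hLA : AtomicFactorization n A LA)
    (hB : IsSetPartition m B) {c : ℕ × Finset (Finset ℕ)}
    (hLC : AtomicFactorization (n + m) (raiseP S A ∪ raiseP T B) (c :: LC))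
    (hc : stMap S c.1 = c.1) :
    ∃ LA', LA = c :: LA' ∧ AtomicFactorization (n - c.1) (concatListP LA').2 LA' ∧
      AtomicFactorization (n - c.1 + m)
        (raiseP (dropSet c.1 S) (concatListP LA').2 ∪ raiseP (dropSet c.1 T) B) LC := by
  obtain ⟨hcat, hcN, hLC', hCeq⟩ := hLC.of_cons
  have hA := hLA.isSetPartition
  have hcn : c.1 ≤ n := hST.card_left ▸ hc ▸ stMap_le_card S c.1
  have hcT : stMap T c.1 = 0 := by have := hST.stMap_add hcN; omega
  cases LA with
  | nil =>
    have := (Prod.mk.inj hLA.2).1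
    have := hcat.2.1
    omega
  | cons a LA' =>
  obtain ⟨haat, -, hLA', hAeq⟩ := hLA.of_cons
  have hac_le : a.1 ≤ c.1 := hLA.fst_le_of_mem_splitPoints
    (hc ▸ hST.stMap_mem_splitPoints hA hLC.fst_mem_splitPoints) hcat.2.1
  have haS : stMap S a.1 = a.1 := stMap_eq_self_of_le hST.pos_left hc hac_le
  have haT : stMap T a.1 = 0 := by have := hST.stMap_add (k := a.1) (by omega); omega
  have hmem : a.1 ∈ splitPoints (n + m) (raiseP S A ∪ raiseP T B) := by
    rw [mem_splitPoints, isSplitPoint_union, isSplitPoint_raiseP (hST.card_left ▸ hA),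
      isSplitPoint_raiseP (hST.card_right ▸ hB), haS, haT]
    exact ⟨by omega, (mem_splitPoints.mp hLA.fst_mem_splitPoints).2, hB.isSplitPoint_zero⟩
  have hac : a.1 = c.1 := le_antisymm hac_le (hLC.fst_le_of_mem_splitPoints hmem haat.2.1)
  have hST' := hST.dropSet_left hc
  have hA' : IsSetPartition (n - c.1) (concatListP LA').2 := hac ▸ hLA'.isSetPartition
  have hC : raiseP S A ∪ raiseP T B = concatP c.1 a.2
      (raiseP (dropSet c.1 S) (concatListP LA').2 ∪ raiseP (dropSet c.1 T) B) := by
    rw [hAeq, hac, raiseP_concatP hST.pos_left hc (hac ▸ haat.1) (hST.card_left ▸ hA'),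
      raiseP_eq_shiftP hcT (hST.card_right ▸ hB), concatP_union_shiftP]
  obtain ⟨h2, htail⟩ := concatP_inj (fun b hb x hx => (hcat.1.bounds_of_mem hb hx).2)
    (fun b hb x hx => hac ▸ (haat.1.bounds_of_mem hb hx).2)
    (fun b hb => hLC'.isSetPartition.exists_pos hb)
    (fun b hb => (mem_union.mp hb).elim
      (exists_pos_of_mem_raiseP hST'.pos_left (hST'.card_left ▸ hA'))
      (exists_pos_of_mem_raiseP hST'.symm.pos_left (hST'.card_right ▸ hB)))
    (hCeq.symm.trans hC)
  refine ⟨LA', by rw [Prod.ext hac h2.symm], hac ▸ hLA', ?_⟩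
  rw [← htail, show n - c.1 + m = n + m - c.1 by omega]
  exact hLC'

theorem isShuffle_of_length_eq (hST : IsInterleaving n m S T) (hLA : AtomicFactorization n A LA)
    (hLB : AtomicFactorization m B LB)
    (hLC : AtomicFactorization (n + m) (raiseP S A ∪ raiseP T B) LC)
    (heq : LC.length = LA.length + LB.length) : IsShuffle LA LB LC := by
  induction LC generalizing n m S T A B LA LB with
  | nil =>
    obtain ⟨rfl, rfl⟩ : LA = [] ∧ LB = [] := by simpa [eq_comm (a := 0)] using heq
    exact .nil
  | cons c LC ih =>
    rcases hST.stMap_eq_or_stMap_eq hLA hLB hLC heq with hc | hc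
    · obtain ⟨LA', rfl, hLA', hLC'⟩ := hST.peel hLA hLB.isSetPartition hLC hc
      simp only [List.length_cons] at heq
      exact .left (ih (hST.dropSet_left hc) hLA' hLB hLC' (by omega))
    · rw [union_comm, add_comm] at hLC
      obtain ⟨LB', rfl, hLB', hLC'⟩ := hST.symm.peel hLB hLA.isSetPartition hLC hc
      rw [union_comm, add_comm] at hLC'
      simp only [List.length_cons] at heq
      exact .right (ih (hST.symm.dropSet_left hc).symm hLA hLB' hLC' (by omega))

end IsInterleaving

theorem atomic_length_shuffle_general (n m : ℕ) (A B : Finset (Finset ℕ)) (S : Finset ℕ)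
    (hS : S ⊆ ground (n + m)) (hcard : S.card = n)
    (LA LB LC : List (ℕ × Finset (Finset ℕ)))
    (hLA : AtomicFactorization n A LA) (hLB : AtomicFactorization m B LB)
    (hLC : AtomicFactorization (n + m)
      (raiseP S A ∪ raiseP (ground (n + m) \ S) B) LC) :
    LC.length ≤ LA.length + LB.length ∧
      (LC.length = LA.length + LB.length ↔ IsShuffle LA LB LC) := by
  have hST : IsInterleaving n m S (ground (n + m) \ S) :=
    ⟨union_sdiff_of_subset hS, disjoint_sdiff, hcard, by
      rw [card_sdiff_of_subset hS, hcard, ground, Nat.card_Icc]; omega⟩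
  exact ⟨hST.length_le hLA hLB hLC, fun h => hST.isShuffle_of_length_eq hLA hLB hLC h,
    IsShuffle.length_eq⟩

/-- for set partitions `A ⊢ [n]`, `B ⊢ [m]` and any `n`-element subset `S` of
`[n+m]`, the atomic length satisfies `ℓ((A↑_S ∪ B↑_{Sᶜ})^!) ≤ ℓ(A^!) + ℓ(B^!)`, with
equality iff `(A↑_S ∪ B↑_{Sᶜ})^!` is a shuffle of the words `A^!` and `B^!`. -/
theorem atomic_length_shuffle (n m : ℕ) (A B : Finset (Finset ℕ)) (S : Finset ℕ)
    (hA : IsSetPartition n A) (hB : IsSetPartition m B)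
    (hS : S ⊆ ground (n + m)) (hcard : S.card = n)
    (LA LB LC : List (ℕ × Finset (Finset ℕ)))
    (hLA : AtomicFactorization n A LA) (hLB : AtomicFactorization m B LB)
    (hLC : AtomicFactorization (n + m)
      (raiseP S A ∪ raiseP (ground (n + m) \ S) B) LC) :
    LC.length ≤ LA.length + LB.length ∧
      (LC.length = LA.length + LB.length ↔ IsShuffle LA LB LC) :=
  atomic_length_shuffle_general n m A B S hS hcard LA LB LC hLA hLB hLC

end
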